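/- arXiv:1311.7466 — 2 statements merged into one kernel-verified Lean document; each statement's English description precedes it below -/
import Mathlib

section
/- Let G=(V,E) be a single-source acyclic network, ω≥1, and ξ'⊆E any nonempty collection of channels. Then there exists a collection ξ⊆ξ' of channels with C_ξ = |ξ| = min{ω, C_{ξ'}}; in particular, taking l=min{ω,C_{ξ'}}, there exist l channel-disjoint paths from s to ξ', and the set ξ of last channels of these l paths satisfies ξ⊆ξ' and C_ξ=|ξ|=l. -/
open scoped BigOperators

/-- A single-source finite acyclic directed multigraph with unit-capacity channels.
Acyclicity is witnessed by a rank function compatible with channel adjacency, and the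
source node `s` has no incoming channels. -/
structure Network (V : Type*) (E : Type*) where
  tail : E → V
  head : E → V
  s : V
  no_in_source : ∀ e, head e ≠ s
  rk : E → ℕ
  acyclic : ∀ d e, head d = tail e → rk d < rk e

namespace Network

variable {V : Type*} {E : Type*}

/-- `p` is a nonempty directed path (a list of channels matching head-to-tail). -/
def IsPath (N : Network V E) (p : List E) : Prop :=
  p ≠ [] ∧ p.Chain' fun d e => N.head d = N.tail e

/-- `p` is a nonempty directed path starting at node `u`. -/
def PathFrom (N : Network V E) (p : List E) (u : V) : Prop :=
  N.IsPath p ∧ ∀ e ∈ p.head?, N.tail e = u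

variable [Fintype V] [Fintype E] [DecidableEq V] [DecidableEq E]

/-- `C` is a cut between the source and the collection `T` of nodes: after removing the
channels of `C` no directed path from the source reaches a node of `T`. -/
def IsCutNodes (N : Network V E) (C : Finset E) (T : Finset V) : Prop :=
  ∀ p : List E, N.PathFrom p N.s → (∃ e ∈ p.getLast?, N.head e ∈ T) → ∃ e ∈ p, e ∈ C

/-- The minimum cut capacity between the source and a collection `T` of nodes. -/
noncomputable def minCutNodes (N : Network V E) (T : Finset V) : ℕ :=
  sInf {n | ∃ C : Finset E, N.IsCutNodes C T ∧ C.card = n}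

/-- The minimum cut capacity `C_t` between the source and a node `t`. -/
noncomputable def minCutNode (N : Network V E) (t : V) : ℕ :=
  N.minCutNodes {t}

/-- `C` is a cut between the source and a collection `ξ` of channels (equivalently, a
cut between the source and the new nodes `n_e`, `e ∈ ξ`, in the network obtained by
subdividing every channel of `ξ`): every path from the source whose last channel lies
in `ξ` must meet `C`. -/
def IsCutChans (N : Network V E) (C : Finset E) (ξ : Finset E) : Prop :=
  ∀ p : List E, N.PathFrom p N.s → (∃ e ∈ p.getLast?, e ∈ ξ) → ∃ e ∈ p, e ∈ C

/-- The minimum cut capacity `C_ξ` between the source and a collection `ξ` of channels. -/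
noncomputable def minCutChans (N : Network V E) (ξ : Finset E) : ℕ :=
  sInf {n | ∃ C : Finset E, N.IsCutChans C ξ ∧ C.card = n}

end Network

section Codes

variable {V E : Type*} [Fintype V] [Fintype E] [DecidableEq V] [DecidableEq E]
variable (F : Type*) [Field F]

/-- `f` is the family of global encoding kernels of the `ω`-dimensional linear network
code with local encoding coefficients `k` (between adjacent real channels) and `ks`
(from the `ω` imaginary message channels at the source): the kernels of the imaginary
message channels form the standard basis of `F^ω` and
`f_e = ∑_{d ∈ In(tail e)} k_{d,e} • f_d`. -/
def IsGlobalKernel (N : Network V E) (ω : ℕ) (k : E → E → F) (ks : Fin ω → E → F)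
    (f : E → Fin ω → F) : Prop :=
  ∀ e, f e = (∑ d : E, if N.head d = N.tail e then k d e • f d else 0)
    + ∑ i : Fin ω, (if N.tail e = N.s then ks i e else 0) • (Pi.single i 1 : Fin ω → F)

/-- `f` is the family of extended global encoding kernels (coordinates indexed by
`Fin ω ⊕ E`, i.e. by `In(s) ∪ E`) of the `ω`-dimensional linear network
error-correction code with local encoding coefficients `k`, `ks`:
`f̃_e = ∑_{d ∈ In(tail e)} k_{d,e} • f̃_d + 1_e`. -/
def IsExtKernel (N : Network V E) (ω : ℕ) (k : E → E → F) (ks : Fin ω → E → F)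
    (f : E → (Fin ω ⊕ E) → F) : Prop :=
  ∀ e, f e = (∑ d : E, if N.head d = N.tail e then k d e • f d else 0)
    + (∑ i : Fin ω, (if N.tail e = N.s then ks i e else 0) • (Pi.single (Sum.inl i) 1 : (Fin ω ⊕ E) → F))
    + (Pi.single (Sum.inr e) 1 : (Fin ω ⊕ E) → F)

variable {ω : ℕ}

/-- The row of the decoding matrix `F̃_T` of a collection `T` of nodes indexed by
`d ∈ In(s) ∪ E` (extended by zero outside the coordinates `In(T)`). -/
def rowT (N : Network V E) (f : E → (Fin ω ⊕ E) → F) (T : Finset V)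
    (d : Fin ω ⊕ E) : E → F :=
  fun e => if N.head e ∈ T then f e d else 0

/-- The message space `Φ(T)` of a collection `T` of nodes. -/
def PhiT (N : Network V E) (f : E → (Fin ω ⊕ E) → F) (T : Finset V) :
    Submodule F (E → F) :=
  Submodule.span F (Set.range fun i : Fin ω => rowT F N f T (Sum.inl i))

/-- The error space `Δ(T, ρ)` of an error pattern `ρ` with respect to `T`. -/
def DeltaT (N : Network V E) (f : E → (Fin ω ⊕ E) → F) (T : Finset V)
    (ρ : Finset E) : Submodule F (E → F) :=
  Submodule.span F ((fun e => rowT F N f T (Sum.inr e)) '' (ρ : Set E))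

/-- The minimum distance `d_min^{(T)}` at a collection `T` of nodes. -/
noncomputable def dminT (N : Network V E) (f : E → (Fin ω ⊕ E) → F) (T : Finset V) : ℕ :=
  sInf {n | ∃ ρ : Finset E, ρ.card = n ∧ DeltaT F N f T ρ ⊓ PhiT F N f T ≠ ⊥}

/-- `ρ₁ ≺_T ρ₂` : `Δ(T,ρ₁) ⊆ Δ(T,ρ₂)` for every `ω`-dimensional `F`-valued LNEC code
on the network. -/
def DominatesT (N : Network V E) (ω : ℕ) (T : Finset V) (ρ₁ ρ₂ : Finset E) : Prop :=
  ∀ (k : E → E → F) (ks : Fin ω → E → F) (f : E → (Fin ω ⊕ E) → F),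
    IsExtKernel F N ω k ks f → DeltaT F N f T ρ₁ ≤ DeltaT F N f T ρ₂

/-- `rank_T(ρ)`, the rank of an error pattern with respect to `T`. -/
noncomputable def rankT (N : Network V E) (ω : ℕ) (T : Finset V) (ρ : Finset E) : ℕ :=
  sInf {n | ∃ ρ' : Finset E, DominatesT F N ω T ρ ρ' ∧ ρ'.card = n}

/-- The row of the decoding matrix `F̃_ξ` of a collection `ξ` of channels indexed by
`d ∈ In(s) ∪ E` (extended by zero outside the coordinates `ξ`). -/
def rowX (N : Network V E) (f : E → (Fin ω ⊕ E) → F) (ξ : Finset E)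
    (d : Fin ω ⊕ E) : E → F :=
  fun e => if e ∈ ξ then f e d else 0

/-- The message space `Φ(ξ)` of a collection `ξ` of channels. -/
def PhiX (N : Network V E) (f : E → (Fin ω ⊕ E) → F) (ξ : Finset E) :
    Submodule F (E → F) :=
  Submodule.span F (Set.range fun i : Fin ω => rowX F N f ξ (Sum.inl i))

/-- The error space `Δ(ξ, ρ)` of an error pattern `ρ` with respect to `ξ`. -/
def DeltaX (N : Network V E) (f : E → (Fin ω ⊕ E) → F) (ξ : Finset E)
    (ρ : Finset E) : Submodule F (E → F) :=
  Submodule.span F ((fun e => rowX F N f ξ (Sum.inr e)) '' (ρ : Set E))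

/-- The minimum distance `d_min^{(ξ)}` at a collection `ξ` of channels. -/
noncomputable def dminX (N : Network V E) (f : E → (Fin ω ⊕ E) → F) (ξ : Finset E) : ℕ :=
  sInf {n | ∃ ρ : Finset E, ρ.card = n ∧ DeltaX F N f ξ ρ ⊓ PhiX F N f ξ ≠ ⊥}

/-- `ρ₁ ≺_ξ ρ₂` : `Δ(ξ,ρ₁) ⊆ Δ(ξ,ρ₂)` for every `ω`-dimensional `F`-valued LNEC code
on the network. -/
def DominatesX (N : Network V E) (ω : ℕ) (ξ : Finset E) (ρ₁ ρ₂ : Finset E) : Prop :=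
  ∀ (k : E → E → F) (ks : Fin ω → E → F) (f : E → (Fin ω ⊕ E) → F),
    IsExtKernel F N ω k ks f → DeltaX F N f ξ ρ₁ ≤ DeltaX F N f ξ ρ₂

/-- `rank_ξ(ρ)`, the rank of an error pattern with respect to `ξ`. -/
noncomputable def rankX (N : Network V E) (ω : ℕ) (ξ : Finset E) (ρ : Finset E) : ℕ :=
  sInf {n | ∃ ρ' : Finset E, DominatesX F N ω ξ ρ ρ' ∧ ρ'.card = n}

/-- Regular LNEC code: `dim Φ(t) = ω` for every non-source node with `C_t ≥ ω`. -/
def Regular (N : Network V E) (f : E → (Fin ω ⊕ E) → F) : Prop :=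
  ∀ t : V, t ≠ N.s → ω ≤ N.minCutNode t →
    Module.finrank F (PhiT F N f ({t} : Finset V)) = ω

/-- Strongly regular LNEC code: `dim Φ(t) = min{ω, C_t}` for every non-source node. -/
def StronglyRegular (N : Network V E) (f : E → (Fin ω ⊕ E) → F) : Prop :=
  ∀ t : V, t ≠ N.s →
    Module.finrank F (PhiT F N f ({t} : Finset V)) = min ω (N.minCutNode t)

/-- Strongly sup-regular LNEC code: `dim Φ(T) = min{ω, C_T}` for every nonempty
collection of non-source nodes. -/
def StronglySupRegular (N : Network V E) (f : E → (Fin ω ⊕ E) → F) : Prop :=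
  ∀ T : Finset V, T.Nonempty → N.s ∉ T →
    Module.finrank F (PhiT F N f T) = min ω (N.minCutNodes T)

/-- Channel-regular LNEC code: `dim Φ(ξ) = min{ω, C_ξ}` for every nonempty collection
of channels. -/
def ChannelRegular (N : Network V E) (f : E → (Fin ω ⊕ E) → F) : Prop :=
  ∀ ξ : Finset E, ξ.Nonempty →
    Module.finrank F (PhiX F N f ξ) = min ω (N.minCutChans ξ)

/-- LNEC multicast MDS code. -/
def IsMulticastMDS (N : Network V E) (f : E → (Fin ω ⊕ E) → F) : Prop :=
  Regular F N f ∧ ∀ t : V, t ≠ N.s → ω ≤ N.minCutNode t →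
    dminT F N f {t} = N.minCutNode t - ω + 1

/-- LNEC broadcast MDS code. -/
def IsBroadcastMDS (N : Network V E) (f : E → (Fin ω ⊕ E) → F) : Prop :=
  StronglyRegular F N f ∧ ∀ t : V, t ≠ N.s →
    (ω ≤ N.minCutNode t → dminT F N f {t} = N.minCutNode t - ω + 1) ∧
    (N.minCutNode t < ω → dminT F N f {t} = 1)

/-- LNEC dispersion MDS code. -/
def IsDispersionMDS (N : Network V E) (f : E → (Fin ω ⊕ E) → F) : Prop :=
  StronglySupRegular F N f ∧ ∀ T : Finset V, T.Nonempty → N.s ∉ T →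
    (ω ≤ N.minCutNodes T → dminT F N f T = N.minCutNodes T - ω + 1) ∧
    (N.minCutNodes T < ω → dminT F N f T = 1)

/-- LNEC generic MDS code. -/
def IsGenericMDS (N : Network V E) (f : E → (Fin ω ⊕ E) → F) : Prop :=
  ChannelRegular F N f ∧ ∀ ξ : Finset E, ξ.Nonempty →
    (ω ≤ N.minCutChans ξ → dminX F N f ξ = N.minCutChans ξ - ω + 1) ∧
    (N.minCutChans ξ < ω → dminX F N f ξ = 1)

/-- `R_t(δ_t)`: the set of error patterns `ρ` with `|ρ| = rank_t(ρ) = δ_t`. -/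
def Rset (N : Network V E) (ω : ℕ) (t : V) : Set (Finset E) :=
  {ρ | ρ.card = N.minCutNode t - ω ∧ rankT F N ω ({t} : Finset V) ρ = N.minCutNode t - ω}

end Codes

/-!
Channels play the role of vertices: two channels are adjacent when the head of the first is the
tail of the second. Channel-disjoint paths from the source to `ξ'` are then vertex-disjoint paths
from `Out(s)` to `ξ'` in an acyclic digraph on `E`, and `C_ξ'` is the least size of a vertex set
separating `Out(s)` from `ξ'`. Menger's theorem gives `C_ξ'` such paths, of which we keep
`l = min ω C_ξ'`; their last channels form `ξ`, and `C_ξ = l` because `ξ` separates itself while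
every separator meets each of the `l` disjoint paths.

Menger's theorem is proved by induction on the set of arcs, following Göring. If deleting an arc
`(x, y)` lets a smaller set `C` separate, then `C ∪ {x}` and `C ∪ {y}` are minimum separators, the
induction hypothesis links `A` to `C ∪ {x}` and `C ∪ {y}` to `B`, and these two linkages can meet
only in `C`, since a crossing elsewhere would give a path avoiding `C`. Gluing them, through the
arc `(x, y)` at `x`, gives `|C| + 1` disjoint paths.
-/

namespace List

variable {α : Type*}

theorem exists_first_mem_prefix {p : List α} {Y : Set α} (h : ∃ e ∈ p, e ∈ Y) :
    ∃ u c, u ++ [c] <+: p ∧ c ∈ Y ∧ ∀ a ∈ u, a ∉ Y := by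
  classical
  obtain ⟨c, hc⟩ : ∃ c, p.find? (· ∈ Y) = some c :=
    Option.isSome_iff_exists.1 (List.find?_isSome.2 (by simpa using h))
  obtain ⟨hcY, u, w, rfl, hu⟩ := List.find?_eq_some_iff_append.1 hc
  exact ⟨u, c, ⟨w, by simp⟩, by simpa using hcY, fun a ha => by simpa using hu a ha⟩

theorem IsChain.imp_append_singleton {R R' : α → α → Prop} {u : List α} {c : α}
    (hp : (u ++ [c]).IsChain R) (h : ∀ a ∈ u, ∀ b, R a b → R' a b) :
    (u ++ [c]).IsChain R' := by
  induction u with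
  | nil => exact isChain_singleton c
  | cons a u ih =>
    rw [cons_append, List.isChain_cons] at hp ⊢
    exact ⟨fun b hb => h a mem_cons_self b (hp.1 b hb),
      ih hp.2 fun a' ha' => h a' (mem_cons_of_mem a ha')⟩

theorem IsChain.nodup_of_rank {β : Type*} [Preorder β] {R : α → α → Prop} (rk : α → β)
    (hR : ∀ a b, R a b → rk a < rk b) {p : List α} (hp : p.IsChain R) : p.Nodup :=
  (isChain_iff_pairwise.1 ((isChain_map rk).2 (hp.imp hR))).nodup.of_map rk

end List

namespace Menger

variable {E β : Type*} [Preorder β] {S S' : Finset (E × E)} {A B : Set E} {C D : Finset E}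
  {n : ℕ} {p : List E}

def IsPathBetween (S : Finset (E × E)) (A B : Set E) (p : List E) : Prop :=
  p.IsChain (fun a b => (a, b) ∈ S) ∧ (∃ a ∈ p.head?, a ∈ A) ∧ ∃ b ∈ p.getLast?, b ∈ B

def IsSeparator (S : Finset (E × E)) (A B : Set E) (C : Finset E) : Prop :=
  ∀ p, IsPathBetween S A B p → ∃ e ∈ p, e ∈ C

def HasDisjointPaths (S : Finset (E × E)) (A B : Set E) (n : ℕ) : Prop :=
  ∃ P : Fin n → List E, (∀ i, IsPathBetween S A B (P i)) ∧
    Pairwise fun i j => (P i).Disjoint (P j)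

theorem IsPathBetween.mono (h : S ⊆ S') (hp : IsPathBetween S A B p) :
    IsPathBetween S' A B p :=
  ⟨hp.1.imp fun _ _ hab => h hab, hp.2⟩

theorem IsPathBetween.prefix {u : List E} {c : E} (hp : IsPathBetween S A B p)
    (hu : u ++ [c] <+: p) : IsPathBetween S A {c} (u ++ [c]) := by
  obtain ⟨t, rfl⟩ := hu
  refine ⟨hp.1.prefix ⟨t, rfl⟩, ?_, c, by simp, rfl⟩
  simpa [List.head?_append_of_ne_nil _ (List.concat_ne_nil c u)] using hp.2.1

theorem IsPathBetween.cons {w : List E} {a b : E} (hab : (a, b) ∈ S)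
    (hw : IsPathBetween S {b} B (b :: w)) : IsPathBetween S {a} B (a :: b :: w) :=
  ⟨List.isChain_cons_cons.2 ⟨hab, hw.1⟩, ⟨a, rfl, rfl⟩, by simpa using hw.2.2⟩

theorem IsPathBetween.append_cons {u w : List E} {c : E} (hu : IsPathBetween S A {c} (u ++ [c]))
    (hw : IsPathBetween S {c} B (c :: w)) : IsPathBetween S A B (u ++ c :: w) := by
  refine ⟨by simpa using hu.1.append_overlap (l₂ := [c]) (by simpa using hw.1) (by simp), ?_, ?_⟩
  · simpa [List.head?_append] using hu.2.1
  · simpa [List.getLast?_append_cons] using hw.2.2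

theorem HasDisjointPaths.mono (h : S ⊆ S') : HasDisjointPaths S A B n → HasDisjointPaths S' A B n :=
  fun ⟨P, hP, hdisj⟩ => ⟨P, fun i => (hP i).mono h, hdisj⟩

theorem HasDisjointPaths.of_le {m : ℕ} (h : m ≤ n) :
    HasDisjointPaths S A B n → HasDisjointPaths S A B m :=
  fun ⟨P, hP, hdisj⟩ => ⟨fun i => P (Fin.castLE h i), fun _ => hP _,
    fun _ _ hij => hdisj fun h' => hij (Fin.castLE_injective h h')⟩

theorem hasDisjointPaths_of_pairwise {T : Finset E} {G : E → List E}
    (hG : ∀ c ∈ T, IsPathBetween S A B (G c))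
    (hdisj : (T : Set E).Pairwise fun c c' => (G c).Disjoint (G c')) :
    HasDisjointPaths S A B T.card :=
  ⟨fun i => G (T.equivFin.symm i), fun i => hG _ (T.equivFin.symm i).2, fun i j hij =>
    hdisj (T.equivFin.symm i).2 (T.equivFin.symm j).2 fun h =>
      hij (T.equivFin.symm.injective (Subtype.ext h))⟩

theorem HasDisjointPaths.le_card (h : HasDisjointPaths S A B n) (hC : IsSeparator S A B C) :
    n ≤ C.card := by
  obtain ⟨P, hP, hdisj⟩ := h
  choose f hfP hfC using fun i => hC _ (hP i)
  simpa using Finset.card_le_card_of_injOn (s := .univ) f (fun i _ => hfC i)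
    fun i _ j _ hij => of_not_not fun hne => hdisj hne (hfP i) (hij ▸ hfP j)

theorem IsSeparator.eq_of_mem_of_mem (hC : IsSeparator S A B C) {u w : List E} {c z v : E}
    (hu : IsPathBetween S A {c} (u ++ [c])) (hnd : (u ++ [c]).Nodup) (huC : ∀ a ∈ u, a ∉ C)
    (hw : IsPathBetween S {z} B (z :: w)) (hwC : ∀ b ∈ w, b ∉ C)
    (hvu : v ∈ u ++ [c]) (hvw : v ∈ z :: w) : v = c ∧ c ∈ C ∧ v = z := by
  obtain ⟨u₁, u₂, hu₁⟩ := List.append_of_mem hvu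
  obtain ⟨w₁, w₂, hw₁⟩ := List.append_of_mem hvw
  have hw₂ : ∀ b ∈ w₂, b ∈ w := by
    rcases List.suffix_cons_iff.1 (⟨w₁, hw₁.symm⟩ : v :: w₂ <:+ z :: w) with h | h
    · exact fun b hb => (List.cons_eq_cons.1 h).2 ▸ hb
    · exact fun b hb => h.subset (List.mem_cons_of_mem v hb)
  -- Following `u ++ [c]` up to `v` and then `z :: w` from `v` on gives a path that must meet `C`.
  have hwalk : IsPathBetween S A B (u₁ ++ v :: w₂) := by
    refine ⟨?_, ?_, ?_⟩
    · simpa using List.IsChain.append_overlap (l₂ := [v])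
        (hu.1.prefix ⟨u₂, by simp [hu₁]⟩) (hw.1.suffix ⟨w₁, by simp [hw₁]⟩) (by simp)
    · simpa [hu₁, List.head?_append] using hu.2.1
    · simpa [hw₁, List.getLast?_append_cons] using hw.2.2
  obtain ⟨e, he, heC⟩ := hC _ hwalk
  have he' : e ∈ u₁ ∨ e = v := by
    simp only [List.mem_append, List.mem_cons] at he
    exact he.imp_right (Or.resolve_right · fun h => hwC e (hw₂ e h) heC)
  have hec : e = c := by
    have : e ∈ u ++ [c] := by rw [hu₁]; rcases he' with h | rfl <;> simp [*]
    exact List.mem_singleton.1 ((List.mem_append.1 this).resolve_left (huC e · heC))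
  subst hec
  have hve : v = e := by
    refine he'.elim (fun heu => ?_) Eq.symm
    have hlast : e ∈ v :: u₂ :=
      List.mem_of_getLast? (by rw [← List.getLast?_append_cons u₁, ← hu₁]; simp)
    exact absurd hlast (List.disjoint_of_nodup_append (hu₁ ▸ hnd) heu)
  subst hve
  refine ⟨rfl, heC, ?_⟩
  exact (List.mem_cons.1 hvw).resolve_right (hwC v · heC)

def reverseArcs (S : Finset (E × E)) : Finset (E × E) :=
  S.map (Equiv.prodComm E E).toEmbedding

@[simp]
theorem mem_reverseArcs {a b : E} : (a, b) ∈ reverseArcs S ↔ (b, a) ∈ S := by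
  simp [reverseArcs]

theorem isPathBetween_reverse :
    IsPathBetween (reverseArcs S) B A p.reverse ↔ IsPathBetween S A B p := by
  simp only [IsPathBetween, List.isChain_reverse, mem_reverseArcs, List.head?_reverse,
    List.getLast?_reverse]
  tauto

theorem isSeparator_reverseArcs :
    IsSeparator (reverseArcs S) B A C ↔ IsSeparator S A B C := by
  refine ⟨fun h p hp => ?_, fun h p hp => ?_⟩
  · simpa using h _ (isPathBetween_reverse.2 hp)
  · simpa using h _ ((isPathBetween_reverse (p := p.reverse)).1 (by simpa using hp))

theorem HasDisjointPaths.reverseArcs (h : HasDisjointPaths S A B n) :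
    HasDisjointPaths (reverseArcs S) B A n :=
  let ⟨P, hP, hdisj⟩ := h
  ⟨fun i => (P i).reverse, fun i => isPathBetween_reverse.2 (hP i),
    fun _ _ hij => List.disjoint_reverse_left.2 (List.disjoint_reverse_right.2 (hdisj hij))⟩

def IsLinkageInto (S : Finset (E × E)) (A : Set E) (Y : Finset E) (P : E → List E) : Prop :=
  (∀ c ∈ Y, IsPathBetween S A {c} (P c ++ [c]) ∧ ∀ a ∈ P c, a ∉ Y) ∧
    (Y : Set E).Pairwise fun c c' => (P c ++ [c]).Disjoint (P c' ++ [c'])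

def IsLinkageFrom (S : Finset (E × E)) (Z : Finset E) (B : Set E) (Q : E → List E) : Prop :=
  (∀ z ∈ Z, IsPathBetween S {z} B (z :: Q z) ∧ ∀ b ∈ Q z, b ∉ Z) ∧
    (Z : Set E).Pairwise fun z z' => (z :: Q z).Disjoint (z' :: Q z')

theorem exists_isLinkageInto {Y : Finset E} (h : HasDisjointPaths S A Y Y.card) :
    ∃ P, IsLinkageInto S A Y P := by
  obtain ⟨P, hP, hdisj⟩ := h
  choose u c hpre hcY hu using fun i => List.exists_first_mem_prefix (Y := (Y : Set E))
    (let ⟨b, hb, hbY⟩ := (hP i).2.2; ⟨b, List.mem_of_getLast? hb, hbY⟩)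
  have hc_mem : ∀ i, c i ∈ P i := fun i => (hpre i).subset (by simp)
  have hc_inj : Function.Injective c := fun i j hij =>
    of_not_not fun hne => hdisj hne (hc_mem i) (hij ▸ hc_mem j)
  have hc_surj : ∀ d ∈ Y, ∃ i, c i = d := fun d hd =>
    let ⟨i, _, hi⟩ := Finset.surj_on_of_inj_on_of_card_le (s := .univ) (fun i _ => c i)
      (fun i _ => hcY i) (fun _ _ _ _ hij => hc_inj hij) (by simp) d hd
    ⟨i, hi.symm⟩
  refine ⟨Function.extend c u fun _ => [], fun d hd => ?_, fun d hd d' hd' hne => ?_⟩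
  · obtain ⟨i, rfl⟩ := hc_surj d hd
    rw [hc_inj.extend_apply]
    exact ⟨(hP i).prefix (hpre i), hu i⟩
  · obtain ⟨i, rfl⟩ := hc_surj d hd
    obtain ⟨j, rfl⟩ := hc_surj d' hd'
    rw [hc_inj.extend_apply, hc_inj.extend_apply]
    exact fun a ha ha' =>
      hdisj (fun h => hne (congrArg c h)) ((hpre i).subset ha) ((hpre j).subset ha')

theorem exists_isLinkageFrom {Z : Finset E} (h : HasDisjointPaths S Z B Z.card) :
    ∃ Q, IsLinkageFrom S Z B Q := by
  obtain ⟨P, hP, hdisj⟩ := exists_isLinkageInto h.reverseArcs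
  have hrev : ∀ z, z :: (P z).reverse = (P z ++ [z]).reverse := by simp
  refine ⟨fun z => (P z).reverse, fun z hz => ⟨?_, fun b hb => (hP z hz).2 b
    (List.mem_reverse.1 hb)⟩, fun z hz z' hz' hne => ?_⟩
  · rw [hrev]
    exact isPathBetween_reverse.1 (by rw [List.reverse_reverse]; exact (hP z hz).1)
  · dsimp only
    rw [hrev, hrev]
    exact List.disjoint_reverse_left.2 (List.disjoint_reverse_right.2 (hdisj hz hz' hne))

theorem IsSeparator.eq_of_mem_linkages (rk : E → β)
    (hrk : ∀ a ∈ S, rk a.1 < rk a.2) (hC : IsSeparator S A B C) {Y Z : Finset E}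
    {P Q : E → List E} (hP : IsLinkageInto S A Y P) (hQ : IsLinkageFrom S Z B Q)
    (hCY : C ⊆ Y) (hCZ : C ⊆ Z) {c z a : E} (hc : c ∈ Y) (hz : z ∈ Z)
    (ha : a ∈ P c ++ [c]) (ha' : a ∈ z :: Q z) : c = z ∧ c ∈ C := by
  have hpc := hP.1 c hc
  have hqz := hQ.1 z hz
  obtain ⟨rfl, hcC, rfl⟩ := hC.eq_of_mem_of_mem hpc.1
    (hpc.1.1.nodup_of_rank rk fun a b h => hrk _ h) (fun b hb hbC => hpc.2 b hb (hCY hbC))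
    hqz.1 (fun b hb hbC => hqz.2 b hb (hCZ hbC)) ha ha'
  exact ⟨rfl, hcC⟩

theorem IsSeparator.of_isSeparator_left {Y : Finset E} (hY : IsSeparator S A B Y)
    (hS' : ∀ a ∈ S, a.1 ∉ Y → a ∈ S') (hD : IsSeparator S' A Y D) : IsSeparator S A B D := by
  intro p hp
  obtain ⟨u, c, hpre, hcY, hu⟩ := List.exists_first_mem_prefix (Y := (Y : Set E)) (hY p hp)
  have hq := hp.prefix hpre
  obtain ⟨e, he, heD⟩ := hD _ ⟨hq.1.imp_append_singleton fun a ha _ hab => hS' _ hab (hu a ha),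
    hq.2.1, c, by simp, hcY⟩
  exact ⟨e, hpre.subset he, heD⟩

theorem IsSeparator.of_isSeparator_right {Z : Finset E} (hZ : IsSeparator S A B Z)
    (hS' : ∀ a ∈ S, a.2 ∉ Z → a ∈ S') (hD : IsSeparator S' Z B D) : IsSeparator S A B D :=
  isSeparator_reverseArcs.1 <| (isSeparator_reverseArcs.2 hZ).of_isSeparator_left
    (fun ⟨_, _⟩ hab ha => mem_reverseArcs.2 (hS' _ (mem_reverseArcs.1 hab) ha))
    (isSeparator_reverseArcs.2 hD)

theorem hasDisjointPaths_of_arcs_empty {B : Finset E}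
    (hn : ∀ C, IsSeparator ∅ A B C → n ≤ C.card) : HasDisjointPaths ∅ A B n := by
  classical
  have hsep : IsSeparator ∅ A B {b ∈ B | b ∈ A} := by
    rintro (_ | ⟨a, _ | ⟨b, t⟩⟩) ⟨hch, ⟨a', ha', hA⟩, b', hb', hB⟩
    · simp at ha'
    · simp only [List.head?_cons, Option.mem_def, Option.some.injEq, List.getLast?_singleton]
        at ha' hb'
      subst ha' hb'
      exact ⟨a, List.mem_singleton_self a, Finset.mem_filter.2 ⟨hB, hA⟩⟩
    · simp at hch
  obtain ⟨T, hT, rfl⟩ := Finset.exists_subset_card_eq (hn _ hsep)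
  refine hasDisjointPaths_of_pairwise (G := fun c => [c]) (fun c hc => ?_) fun c _ c' _ hne => ?_
  · have hc' := Finset.mem_filter.1 (hT hc)
    exact ⟨List.isChain_singleton c, ⟨c, rfl, hc'.2⟩, c, rfl, hc'.1⟩
  · simpa using hne.symm

section DecidableEq

variable [DecidableEq E] {x y : E}

theorem IsPathBetween.erase (hp : IsPathBetween S A B p) (h : x ∉ p ∨ y ∉ p) :
    IsPathBetween (S.erase (x, y)) A B p :=
  ⟨hp.1.imp_of_mem_imp fun a b ha hb hab => Finset.mem_erase.2 ⟨by rintro ⟨⟩; tauto, hab⟩, hp.2⟩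

theorem IsSeparator.insert_left (hC : IsSeparator (S.erase (x, y)) A B C) :
    IsSeparator S A B (insert x C) := by
  intro p hp
  by_cases hx : x ∈ p
  · exact ⟨x, hx, Finset.mem_insert_self x C⟩
  · obtain ⟨e, he, heC⟩ := hC p (hp.erase (Or.inl hx))
    exact ⟨e, he, Finset.mem_insert_of_mem heC⟩

theorem IsSeparator.insert_right (hC : IsSeparator (S.erase (x, y)) A B C) :
    IsSeparator S A B (insert y C) := by
  intro p hp
  by_cases hy : y ∈ p
  · exact ⟨y, hy, Finset.mem_insert_self y C⟩
  · obtain ⟨e, he, heC⟩ := hC p (hp.erase (Or.inr hy))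
    exact ⟨e, he, Finset.mem_insert_of_mem heC⟩

theorem hasDisjointPaths_of_isLinkage (rk : E → β) (hrk : ∀ a ∈ S', rk a.1 < rk a.2)
    (hS' : S' ⊆ S) (hxy : (x, y) ∈ S) (hC : IsSeparator S' A B C) (hyC : y ∉ C)
    {P Q : E → List E} (hP : IsLinkageInto S' A (insert x C) P)
    (hQ : IsLinkageFrom S' (insert y C) B Q) :
    HasDisjointPaths S A B (insert x C).card := by
  -- the path into `c` is continued by the path out of `σ c`, through the arc `(x, y)` if `c = x`
  set σ : E → E := fun c => if c = x then y else c
  have hσZ : ∀ c ∈ insert x C, σ c ∈ insert y C := by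
    intro c hc
    simp only [σ, Finset.mem_insert] at hc ⊢
    grind
  have hσ_inj : ∀ c ∈ insert x C, ∀ c' ∈ insert x C, σ c = σ c' → c = c' := by
    intro c hc c' hc' h
    simp only [σ, Finset.mem_insert] at h hc hc'
    grind
  have hcross : ∀ c ∈ insert x C, ∀ c' ∈ insert x C, ∀ a, a ∈ P c ++ [c] →
      a ∈ σ c' :: Q (σ c') → c = c' := by
    intro c hc c' hc' a ha ha'
    obtain ⟨hcc', hcC⟩ := hC.eq_of_mem_linkages rk hrk hP hQ (Finset.subset_insert x C)
      (Finset.subset_insert y C) hc (hσZ c' hc') ha ha'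
    simp only [σ] at hcc'
    grind
  set G : E → List E := fun c => P c ++ c :: if c = x then y :: Q y else Q c
  have hG_mem : ∀ c a, a ∈ G c → a ∈ P c ++ [c] ∨ a ∈ σ c :: Q (σ c) := by
    intro c a ha
    by_cases h : c = x
    · subst h
      simp only [G, σ, if_true, List.mem_append, List.mem_cons] at ha ⊢
      tauto
    · simp only [G, σ, h, if_false, List.mem_append, List.mem_cons] at ha ⊢
      tauto
  refine hasDisjointPaths_of_pairwise (G := G) (fun c hc => ?_) fun c hc c' hc' hne a ha ha' => ?_
  · refine ((hP.1 c hc).1.mono hS').append_cons ?_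
    by_cases h : c = x
    · subst h
      simpa [G] using ((hQ.1 y (Finset.mem_insert_self y C)).1.mono hS').cons hxy
    · have hcC : c ∈ insert y C := by simpa [σ, h] using hσZ c hc
      simpa [G, h] using (hQ.1 c hcC).1.mono hS'
  rcases hG_mem c a ha with h₁ | h₁ <;> rcases hG_mem c' a ha' with h₂ | h₂
  · exact hP.2 hc hc' hne h₁ h₂
  · exact hne (hcross c hc c' hc' a h₁ h₂)
  · exact hne (hcross c' hc' c hc a h₂ h₁).symm
  · exact hQ.2 (hσZ c hc) (hσZ c' hc') (fun h => hne (hσ_inj c hc c' hc' h)) h₁ h₂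

theorem hasDisjointPaths_of_isSeparator_erase (rk : E → β) (hrk : ∀ a ∈ S, rk a.1 < rk a.2)
    (hxy : (x, y) ∈ S)
    (ih : ∀ (A' : Set E) (B' : Finset E) (m : ℕ),
      (∀ D, IsSeparator (S.erase (x, y)) A' B' D → m ≤ D.card) →
        HasDisjointPaths (S.erase (x, y)) A' B' m)
    {B : Finset E} (hC : IsSeparator (S.erase (x, y)) A B C)
    (hn : ∀ D, IsSeparator S A B D → C.card + 1 ≤ D.card) :
    HasDisjointPaths S A B (C.card + 1) := by
  have hxC : x ∉ C := fun hx => by simpa [Finset.insert_eq_of_mem hx] using hn _ hC.insert_left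
  have hyC : y ∉ C := fun hy => by simpa [Finset.insert_eq_of_mem hy] using hn _ hC.insert_right
  have hY : (insert x C).card = C.card + 1 := Finset.card_insert_of_notMem hxC
  have hZ : (insert y C).card = C.card + 1 := Finset.card_insert_of_notMem hyC
  obtain ⟨P, hP⟩ := exists_isLinkageInto <| ih A (insert x C) _ fun D hD => hY ▸ hn D <|
    hC.insert_left.of_isSeparator_left
      (fun a ha hax => Finset.mem_erase.2 ⟨by rintro rfl; simp at hax, ha⟩) hD
  obtain ⟨Q, hQ⟩ := exists_isLinkageFrom <| ih (insert y C : Finset E) B _ fun D hD => hZ ▸ hn D <|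
    hC.insert_right.of_isSeparator_right
      (fun a ha hay => Finset.mem_erase.2 ⟨by rintro rfl; simp at hay, ha⟩) hD
  exact hY ▸ hasDisjointPaths_of_isLinkage rk (fun a ha => hrk a (Finset.mem_of_mem_erase ha))
    (Finset.erase_subset _ _) hxy hC hyC hP hQ

theorem hasDisjointPaths_of_forall_le_card (rk : E → β) {S : Finset (E × E)}
    (hrk : ∀ a ∈ S, rk a.1 < rk a.2) (A : Set E) (B : Finset E) (n : ℕ)
    (hn : ∀ C, IsSeparator S A B C → n ≤ C.card) : HasDisjointPaths S A B n := by
  induction S using Finset.strongInduction generalizing A B n with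
  | H S ih =>
  obtain rfl | ⟨⟨x, y⟩, hxy⟩ := S.eq_empty_or_nonempty
  · exact hasDisjointPaths_of_arcs_empty hn
  have ih' := ih _ (Finset.erase_ssubset hxy) fun a ha => hrk a (Finset.mem_of_mem_erase ha)
  by_cases h : ∀ C, IsSeparator (S.erase (x, y)) A B C → n ≤ C.card
  · exact (ih' A B n h).mono (Finset.erase_subset _ _)
  push Not at h
  obtain ⟨C, hC, hlt⟩ := h
  obtain rfl : n = C.card + 1 :=
    le_antisymm ((hn _ hC.insert_left).trans (Finset.card_insert_le x C)) hlt
  exact hasDisjointPaths_of_isSeparator_erase rk hrk hxy ih' hC hn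

end DecidableEq

end Menger

namespace Network

open Menger

variable {V E : Type*} (N : Network V E) {ξ C : Finset E}

def out (u : V) : Set E := {e | N.tail e = u}

theorem isCutChans_self : N.IsCutChans ξ ξ :=
  fun _ _ ⟨e, he, heξ⟩ => ⟨e, List.mem_of_getLast? he, heξ⟩

theorem minCutChans_le (h : N.IsCutChans C ξ) : N.minCutChans ξ ≤ C.card :=
  Nat.sInf_le ⟨C, h, rfl⟩

theorem le_minCutChans {n : ℕ} (h : ∀ C, N.IsCutChans C ξ → n ≤ C.card) :
    n ≤ N.minCutChans ξ :=
  le_csInf ⟨_, ξ, N.isCutChans_self, rfl⟩ fun _ ⟨C, hC, hn⟩ => hn ▸ h C hC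

section Arcs

variable [Fintype E] [DecidableEq V]

def arcs : Finset (E × E) := {a | N.head a.1 = N.tail a.2}

theorem isPathBetween_arcs_iff {B : Set E} {p : List E} :
    IsPathBetween N.arcs (N.out N.s) B p ↔ N.PathFrom p N.s ∧ ∃ e ∈ p.getLast?, e ∈ B := by
  cases p <;> simp [IsPathBetween, PathFrom, IsPath, arcs, out]
  exact and_assoc.symm

theorem isCutChans_iff : N.IsCutChans C ξ ↔ IsSeparator N.arcs (N.out N.s) ξ C := by
  simp only [IsCutChans, IsSeparator, isPathBetween_arcs_iff, and_imp, Finset.mem_coe]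

theorem hasDisjointPaths_minCutChans [DecidableEq E] :
    HasDisjointPaths N.arcs (N.out N.s) ξ (N.minCutChans ξ) :=
  hasDisjointPaths_of_forall_le_card N.rk (fun a ha => N.acyclic _ _ (by simpa [arcs] using ha))
    _ _ _ fun C hC => N.minCutChans_le (N.isCutChans_iff.2 hC)

end Arcs

end Network

theorem statement15_general {V E : Type*} [Fintype E] [DecidableEq V] [DecidableEq E]
    (N : Network V E) (ω : ℕ) (ξ' : Finset E) :
    ∃ (P : Fin (min ω (N.minCutChans ξ')) → List E)
      (last : Fin (min ω (N.minCutChans ξ')) → E),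
      (∀ i, N.PathFrom (P i) N.s ∧ (P i).getLast? = some (last i) ∧ last i ∈ ξ') ∧
      (∀ i j, i ≠ j → ∀ e, e ∈ P i → e ∉ P j) ∧
      Finset.image last Finset.univ ⊆ ξ' ∧
      (Finset.image last Finset.univ).card = min ω (N.minCutChans ξ') ∧
      N.minCutChans (Finset.image last Finset.univ) = min ω (N.minCutChans ξ') := by
  obtain ⟨P, hP, hdisj⟩ := (N.hasDisjointPaths_minCutChans (ξ := ξ')).of_le (min_le_right ω _)
  choose last hlast hlastξ' using fun i => (hP i).2.2
  have hlast_inj : Function.Injective last := fun i j hij => of_not_not fun hne =>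
    hdisj hne (List.mem_of_getLast? (hlast i)) (hij ▸ List.mem_of_getLast? (hlast j))
  have hcard : (Finset.image last Finset.univ).card = min ω (N.minCutChans ξ') := by
    simp [Finset.card_image_of_injective _ hlast_inj]
  have hpaths : Menger.HasDisjointPaths N.arcs (N.out N.s) ↑(Finset.image last Finset.univ)
      (min ω (N.minCutChans ξ')) :=
    ⟨P, fun i => ⟨(hP i).1, (hP i).2.1, last i, hlast i, by simp⟩, hdisj⟩
  refine ⟨P, last, fun i => ⟨(N.isPathBetween_arcs_iff.1 (hP i)).1, hlast i, hlastξ' i⟩,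
    fun i j hij e hi hj => hdisj hij hi hj, ?_, hcard, ?_⟩
  · simpa [Finset.image_subset_iff] using hlastξ'
  · exact le_antisymm ((N.minCutChans_le N.isCutChans_self).trans_eq hcard)
      (N.le_minCutChans fun C hC => hpaths.le_card (N.isCutChans_iff.1 hC))

/-- For any nonempty collection `ξ' ⊆ E` there exist
`l = min{ω, C_{ξ'}}` channel-disjoint paths from the source to `ξ'`, and the set `ξ`
of last channels of these paths satisfies `ξ ⊆ ξ'` and `C_ξ = |ξ| = l`. -/
theorem statement15 {V E : Type*} [Fintype V] [Fintype E] [DecidableEq V] [DecidableEq E]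
    (N : Network V E) (ω : ℕ) (hω : 1 ≤ ω) (ξ' : Finset E) (hξ' : ξ'.Nonempty) :
    ∃ (P : Fin (min ω (N.minCutChans ξ')) → List E)
      (last : Fin (min ω (N.minCutChans ξ')) → E),
      (∀ i, N.PathFrom (P i) N.s ∧ (P i).getLast? = some (last i) ∧ last i ∈ ξ') ∧
      (∀ i j, i ≠ j → ∀ e, e ∈ P i → e ∉ P j) ∧
      Finset.image last Finset.univ ⊆ ξ' ∧
      (Finset.image last Finset.univ).card = min ω (N.minCutChans ξ') ∧
      N.minCutChans (Finset.image last Finset.univ) = min ω (N.minCutChans ξ') :=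
  statement15_general N ω ξ'
end

section
/- Let G=(V,E) be a single-source acyclic network with information rate ω, let t∈V be a non-source node with C_t≥ω, and let ρ∈R_t(δ_t) be an error pattern with |ρ|=rank_t(ρ)=δ_t. Then in the extended network G̃ there exist ω+δ_t channel-disjoint paths from In(s)∪ρ' to t, where ρ'={e' : e∈ρ}, such that: (1) exactly δ_t of the paths start from channels of ρ' and exactly ω of the paths start from the imaginary message channels of In(s); and (2) the δ_t paths from ρ' start with distinct channels of ρ', and each path starting with an imaginary error channel e'∈ρ' passes through the corresponding channel e∈ρ. -/
open scoped BigOperators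

/-!
Turn the errors on `ρ` into sources: add a new source with `ω` channels into `s` and re-attach
every channel of `ρ` to it. Every cut between the new source and `t` then has at least
`ω + δ_t` channels. Either the cut contains all `ω` message channels, and its remaining channels
separate `ρ` from `t`, so there are at least `rank_t(ρ) = δ_t` of them: for every code, the error
row of a channel separated from `t` by `D` lies in `Δ(t, D)`. Or it misses a message channel, and
its channels of `G` form a cut between `s` and `t`, of size at least `C_t = ω + δ_t`. By Menger's
theorem there are `ω + δ_t` channel-disjoint paths from the new source to `t`. The new source has
exactly `ω + δ_t` outgoing channels, so each of them starts one of these paths, and removing the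
message channels gives the required paths.
-/

open scoped Function

namespace List

variable {α β : Type*}

theorem sum_map_sub_of_isChain {G : Type*} [AddCommGroup G] (src dst : α → β) (g : β → G) :
    ∀ {l : List α} {a b : α}, l.IsChain (fun x y => dst x = src y) → l.head? = some a →
      l.getLast? = some b → (l.map fun x => g (dst x) - g (src x)).sum = g (dst b) - g (src a)
  | [], _, _, _, ha, _ => by simp at ha
  | [x], _, _, _, ha, hb => by simp_all
  | x :: y :: l, a, b, hl, ha, hb => by
    obtain ⟨hxy, hl⟩ := isChain_cons_cons.1 hl
    obtain rfl : x = a := by simpa using ha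
    rw [map_cons, sum_cons, sum_map_sub_of_isChain src dst g hl rfl (by simpa using hb), hxy]
    abel

theorem exists_nodup_isChain_of_reflTransGen {r : α → α → Prop} {a b : α}
    (h : Relation.ReflTransGen r a b) :
    ∃ l : List α, l.IsChain r ∧ l.Nodup ∧ l.head? = some a ∧ l.getLast? = some b := by
  induction h using Relation.ReflTransGen.head_induction_on with
  | refl => exact ⟨[b], by simp⟩
  | @head a c hac _ ih =>
    obtain ⟨l, hl, hnd, hc, hb⟩ := ih
    by_cases ha : a ∈ l
    · obtain ⟨l₁, l₂, rfl⟩ := append_of_mem ha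
      exact ⟨a :: l₂, (isChain_append.1 hl).2.1, hnd.sublist (sublist_append_right _ _), rfl,
        by rwa [getLast?_append_cons] at hb⟩
    · obtain ⟨l', rfl⟩ : ∃ l', l = c :: l' := by cases l <;> simp_all
      refine ⟨a :: c :: l', hl.cons (by simpa using hac), nodup_cons.2 ⟨ha, hnd⟩, rfl, ?_⟩
      rwa [getLast?_cons_cons]

@[simp]
theorem filterMap_getLeft?_map_inl (l : List α) :
    (l.map (Sum.inl : α → α ⊕ β)).filterMap Sum.getLeft? = l := by
  simp [filterMap_map, Function.comp_def]

theorem exists_eq_map_inl {P : α → Prop} :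
    ∀ {l : List (α ⊕ β)}, (∀ y ∈ l, ∃ x, y = .inl x ∧ P x) →
      ∃ q : List α, l = q.map .inl ∧ ∀ x ∈ q, P x
  | [], _ => ⟨[], rfl, by simp⟩
  | y :: l, h => by
    obtain ⟨x, rfl, hx⟩ := h y mem_cons_self
    obtain ⟨q, rfl, hq⟩ := exists_eq_map_inl fun y hy => h y (mem_cons_of_mem _ hy)
    exact ⟨x :: q, rfl, forall_mem_cons.2 ⟨hx, hq⟩⟩

end List

theorem Fin.pairwise_disjoint_cons {α : Type*} {k : ℕ} {q : List α} {P : Fin k → List α}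
    (hq : ∀ i, q.Disjoint (P i)) (hP : Pairwise (List.Disjoint on P)) :
    Pairwise (List.Disjoint on (Fin.cons q P : Fin (k + 1) → List α)) := by
  intro i j hij
  cases i using Fin.cases <;> cases j using Fin.cases <;>
    simp only [Function.onFun, Fin.cons_zero, Fin.cons_succ]
  · exact absurd rfl hij
  · exact hq _
  · exact (hq _).symm
  · exact hP fun h => hij (congrArg Fin.succ h)

namespace Network

section Paths

variable {V E : Type*} (N : Network V E)

theorem nodup_of_isChain {p : List E} (hp : p.IsChain fun d e => N.head d = N.tail e) :
    p.Nodup :=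
  have hrk : (p.map N.rk).IsChain (· < ·) :=
    List.isChain_map _ |>.2 (hp.imp fun d e => N.acyclic d e)
  List.Nodup.of_map N.rk ((List.isChain_iff_pairwise.1 hrk).imp ne_of_lt)

theorem tail_ne_s_of_mem_tail {p : List E} (hp : p.IsChain fun d e => N.head d = N.tail e)
    {e : E} (he : e ∈ p.tail) : N.tail e ≠ N.s := by
  induction p with
  | nil => simp at he
  | cons a l ih =>
    cases l with
    | nil => simp at he
    | cons b l =>
      obtain ⟨hab, hl⟩ := List.isChain_cons_cons.1 hp
      rcases List.mem_cons.1 he with rfl | he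
      · exact hab ▸ N.no_in_source a
      · exact ih hl he

def Separates (D : Finset E) (x : E) (t : V) : Prop :=
  ∀ q : List E, N.IsPath q → q.head? = some x → (∀ y ∈ q.getLast?, N.head y = t) →
    ∃ y ∈ q, y ∈ D

variable [Fintype E]

noncomputable def height (e : E) : ℕ :=
  (Finset.univ.filter fun d => N.rk e < N.rk d).card

theorem height_lt {d e : E} (h : N.head d = N.tail e) : N.height e < N.height d := by
  refine Finset.card_lt_card ((Finset.ssubset_iff_of_subset fun x hx => ?_).2 ⟨e, ?_, ?_⟩)
  · simp only [Finset.mem_filter, Finset.mem_univ, true_and] at hx ⊢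
    exact (N.acyclic d e h).trans hx
  · simpa using N.acyclic d e h
  · simp

variable [DecidableEq V]

def In (v : V) : Finset E := Finset.univ.filter fun d => N.head d = v

def Out (v : V) : Finset E := Finset.univ.filter fun d => N.tail d = v

variable {N} in
theorem Separates.of_mem_Out {D : Finset E} {x g : E} {t : V} (hx : N.Separates D x t)
    (hxD : x ∉ D) (hg : g ∈ N.Out (N.head x)) : N.Separates D g t := by
  intro q hq hqg hqt
  have hxq : (x :: q).IsChain fun d e => N.head d = N.tail e :=
    hq.2.cons (by simpa [hqg, Out, eq_comm] using hg)
  obtain ⟨y, hy, hyD⟩ := hx (x :: q) ⟨by simp, hxq⟩ rfl <| by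
    obtain ⟨z, q, rfl⟩ : ∃ z q', q = z :: q' := by cases q <;> simp_all
    rwa [List.getLast?_cons_cons]
  exact ⟨y, (List.mem_cons.1 hy).resolve_left (by rintro rfl; exact hxD hyD), hyD⟩

theorem eq_of_forall_eq_sum_In {R : Type*} [Semiring R] (k : E → E → R) (c : E → R)
    {u w : E → R} (hu : ∀ h, u h = ∑ d ∈ N.In (N.tail h), k d h * u d + c h)
    (hw : ∀ h, w h = ∑ d ∈ N.In (N.tail h), k d h * w d + c h) : u = w := by
  funext h
  induction hn : N.rk h using Nat.strong_induction_on generalizing h with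
  | _ n ih =>
    rw [hu, hw]
    congr 1
    refine Finset.sum_congr rfl fun d hd => ?_
    rw [ih _ (hn ▸ N.acyclic d h (Finset.mem_filter.1 hd).2) d rfl]

variable {N} in
theorem exists_head?_eq_of_card_Out_le {k : ℕ} {P : Fin k → List E}
    (hP : ∀ i, N.PathFrom (P i) N.s) (hdisj : Pairwise (List.Disjoint on P))
    (hk : (N.Out N.s).card ≤ k) {e : E} (he : N.tail e = N.s) : ∃ i, (P i).head? = some e := by
  obtain ⟨i, -, rfl⟩ := Finset.surj_on_of_inj_on_of_card_le (s := Finset.univ) (t := N.Out N.s)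
    (fun i _ => (P i).head (hP i).1.1)
    (fun i _ => by simpa [Out] using (hP i).2 _ (List.head?_eq_some_head _))
    (fun i j _ _ hij => by_contra fun hne =>
      hdisj hne (List.head_mem _) (by rw [hij]; exact List.head_mem _))
    (by simpa using hk) e (by simpa [Out] using he)
  exact ⟨i, List.head?_eq_some_head _⟩

end Paths

section Flow

variable {V E : Type*} [DecidableEq V] (N : Network V E)

def inflow (F : Finset E) (v : V) : ℤ := ∑ e ∈ F, if N.head e = v then 1 else 0

def outflow (F : Finset E) (v : V) : ℤ := ∑ e ∈ F, if N.tail e = v then 1 else 0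

def excess (F : Finset E) (v : V) : ℤ := N.inflow F v - N.outflow F v

/-- A set `F` of channels, read as a `0-1` flow, carries `k` units from the source to `t`. -/
def IsFlow (F : Finset E) (t : V) (k : ℕ) : Prop :=
  ∀ v, N.excess F v = k * ((if t = v then 1 else 0) - if N.s = v then 1 else 0)

theorem inflow_s (F : Finset E) : N.inflow F N.s = 0 :=
  Finset.sum_eq_zero fun e _ => if_neg (N.no_in_source e)

theorem one_le_inflow {F : Finset E} {e : E} (he : e ∈ F) : 1 ≤ N.inflow F (N.head e) := by
  calc (1 : ℤ) = if N.head e = N.head e then 1 else 0 := by rw [if_pos rfl]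
    _ ≤ N.inflow F (N.head e) :=
      Finset.single_le_sum (f := fun d => if N.head d = N.head e then (1 : ℤ) else 0)
        (fun d _ => by split_ifs <;> norm_num) he

theorem exists_tail_eq_of_outflow_ne_zero {F : Finset E} {v : V} (h : N.outflow F v ≠ 0) :
    ∃ e ∈ F, N.tail e = v := by
  obtain ⟨e, he, hne⟩ := Finset.exists_ne_zero_of_sum_ne_zero h
  exact ⟨e, he, by_contra fun h' => hne (if_neg h')⟩

theorem sum_excess (F : Finset E) (R : Finset V) :
    ∑ v ∈ R, N.excess F v
      = ∑ e ∈ F, ((if N.head e ∈ R then 1 else 0) - if N.tail e ∈ R then 1 else 0) := by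
  simp only [excess, inflow, outflow, Finset.sum_sub_distrib]
  rw [Finset.sum_comm, Finset.sum_comm (s := R)]
  simp [Finset.sum_ite_eq]

theorem exists_tail_mem_head_not_mem {p : List E} {R : Finset V} {u : V} (hp : N.PathFrom p u)
    (hu : u ∈ R) (hlast : ∀ y ∈ p.getLast?, N.head y ∉ R) :
    ∃ e ∈ p, N.tail e ∈ R ∧ N.head e ∉ R := by
  obtain ⟨⟨hne, hpc⟩, hpu⟩ := hp
  obtain ⟨a, ha⟩ := Option.ne_none_iff_exists'.1 (mt List.head?_eq_none_iff.1 hne)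
  obtain ⟨b, hb⟩ := Option.ne_none_iff_exists'.1 (mt List.getLast?_eq_none_iff.1 hne)
  -- the indicator of `R` drops from `1` to `0` along the path, so some channel lowers it
  have hsum := List.sum_map_sub_of_isChain N.tail N.head
    (fun w => if w ∈ R then (1 : ℤ) else 0) hpc ha hb
  rw [hpu a ha, if_neg (hlast b hb), if_pos hu] at hsum
  obtain ⟨e, he, hlt⟩ := List.exists_lt_of_sum_lt
    (fun x => (if N.head x ∈ R then (1 : ℤ) else 0) - if N.tail x ∈ R then 1 else 0)
    (fun _ => 0) (by rw [hsum]; simp)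
  refine ⟨e, he, ?_⟩
  by_cases h₁ : N.tail e ∈ R <;> by_cases h₂ : N.head e ∈ R <;> simp_all

variable [DecidableEq E]

theorem excess_sdiff {F Q : Finset E} (hQ : Q ⊆ F) (v : V) :
    N.excess (F \ Q) v = N.excess F v - N.excess Q v := by
  simp only [excess, inflow, outflow, Finset.sum_sdiff_eq_sub hQ]
  ring

theorem excess_toFinset {q : List E} (hq : q.IsChain fun d e => N.head d = N.tail e) {a b : E}
    (ha : q.head? = some a) (hb : q.getLast? = some b) (v : V) :
    N.excess q.toFinset v = (if N.head b = v then 1 else 0) - if N.tail a = v then 1 else 0 := by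
  rw [excess, inflow, outflow, ← Finset.sum_sub_distrib,
    List.sum_toFinset _ (N.nodup_of_isChain hq)]
  exact List.sum_map_sub_of_isChain N.tail N.head (fun w => if w = v then 1 else 0) hq ha hb

end Flow

section Residual

variable {V E : Type*} (N : Network V E)

/-- A residual step: `(e, true)` traverses a channel `e ∉ F` forwards, `(e, false)` a channel
`e ∈ F` backwards. -/
def IsResidual (F : Finset E) (x : E × Bool) : Prop :=
  if x.2 then x.1 ∉ F else x.1 ∈ F

def resSrc (x : E × Bool) : V := if x.2 then N.tail x.1 else N.head x.1

def resDst (x : E × Bool) : V := if x.2 then N.head x.1 else N.tail x.1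

def ResAdj (F : Finset E) (u w : V) : Prop :=
  ∃ x, IsResidual F x ∧ N.resSrc x = u ∧ N.resDst x = w

theorem exists_residual_walk {F : Finset E} :
    ∀ {l : List V}, l.IsChain (N.ResAdj F) →
      ∃ σ : List (E × Bool), σ.IsChain (fun x y => N.resDst x = N.resSrc y) ∧
        σ.map N.resSrc = l.dropLast ∧ σ.map N.resDst = l.tail ∧ ∀ x ∈ σ, IsResidual F x
  | [], _ => ⟨[], by simp⟩
  | [_], _ => ⟨[], by simp⟩
  | _ :: w :: l, h => by
    obtain ⟨⟨x, hx, rfl, rfl⟩, hl⟩ := List.isChain_cons_cons.1 h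
    obtain ⟨σ, hσ, hsrc, hdst, hres⟩ := exists_residual_walk hl
    refine ⟨x :: σ, hσ.cons fun y hy => ?_, by simp [hsrc], by simp [hdst],
      List.forall_mem_cons.2 ⟨hx, hres⟩⟩
    obtain ⟨σ, rfl⟩ : ∃ σ', σ = y :: σ' := by cases σ <;> simp_all
    obtain ⟨z, l, rfl⟩ : ∃ z l', l = z :: l' := by cases l <;> simp_all
    simp only [List.map_cons, List.dropLast_cons_cons, List.cons.injEq] at hsrc
    exact hsrc.1.symm

theorem nodup_fst_of_nodup_resSrc {F : Finset E} {σ : List (E × Bool)}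
    (hσ : ∀ x ∈ σ, IsResidual F x) (hnd : (σ.map N.resSrc).Nodup) :
    (σ.map Prod.fst).Nodup := by
  refine (hnd.of_map _).map_on fun x hx y hy hxy => Prod.ext hxy ?_
  have hx' := hσ x hx
  have hy' := hσ y hy
  cases hx2 : x.2 <;> cases hy2 : y.2 <;> simp_all [IsResidual]

variable [DecidableEq E]

def toggle (F : Finset E) (x : E × Bool) : Finset E :=
  if x.2 then insert x.1 F else F.erase x.1

theorem isResidual_toggle {F : Finset E} {x y : E × Bool} (hxy : y.1 ≠ x.1)
    (hy : IsResidual F y) : IsResidual (toggle F x) y := by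
  obtain ⟨e, _ | _⟩ := x <;> simpa [IsResidual, toggle, hxy] using hy

variable [DecidableEq V]

theorem excess_toggle {F : Finset E} {x : E × Bool} (hx : IsResidual F x) (v : V) :
    N.excess (toggle F x) v
      = N.excess F v + ((if N.resDst x = v then 1 else 0) - if N.resSrc x = v then 1 else 0) := by
  obtain ⟨e, _ | _⟩ := x <;>
    simp only [IsResidual, toggle, resSrc, resDst, Bool.false_eq_true, if_true, if_false] at hx ⊢
  · simp only [excess, inflow, outflow, Finset.sum_erase_eq_sub hx]
    ring
  · simp only [excess, inflow, outflow, Finset.sum_insert hx]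
    ring

theorem excess_foldl_toggle :
    ∀ {F : Finset E} {σ : List (E × Bool)}, (∀ x ∈ σ, IsResidual F x) →
      (σ.map Prod.fst).Nodup → ∀ v, N.excess (σ.foldl toggle F) v = N.excess F v +
        (σ.map fun x => (if N.resDst x = v then 1 else 0) - if N.resSrc x = v then 1 else 0).sum
  | _, [], _, _, _ => by simp
  | F, x :: σ, hσ, hnd, v => by
    rw [List.map_cons, List.nodup_cons, List.mem_map] at hnd
    have hσ' : ∀ y ∈ σ, IsResidual (toggle F x) y := fun y hy =>
      isResidual_toggle (fun h => hnd.1 ⟨y, hy, h⟩) (hσ y (List.mem_cons_of_mem x hy))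
    rw [List.foldl_cons, excess_foldl_toggle hσ' hnd.2, excess_toggle N (hσ x List.mem_cons_self),
      List.map_cons, List.sum_cons]
    ring

end Residual

section Menger

variable {V E : Type*} [DecidableEq V] {N : Network V E}

theorem IsFlow.exists_path [Fintype E] {F : Finset E} {t : V} {k : ℕ} (hF : N.IsFlow F t k)
    {e : E} (he : e ∈ F) :
    ∃ q : List E, q.head? = some e ∧ q.IsChain (fun d e => N.head d = N.tail e) ∧
      (∀ x ∈ q, x ∈ F) ∧ ∀ x ∈ q.getLast?, N.head x = t := by
  by_cases het : N.head e = t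
  · exact ⟨[e], rfl, by simp, by simpa, by simpa⟩
  have hcons : N.excess F (N.head e) = 0 := by
    rw [hF, if_neg (Ne.symm het), if_neg (N.no_in_source e).symm]
    ring
  obtain ⟨d, hd, hde⟩ := N.exists_tail_eq_of_outflow_ne_zero (F := F) (v := N.head e) <| by
    have := N.one_le_inflow he
    rw [excess] at hcons
    omega
  obtain ⟨q, hq, hqc, hqF, hqt⟩ := hF.exists_path hd
  obtain ⟨q, rfl⟩ : ∃ q', q = d :: q' := by cases q <;> simp_all
  exact ⟨e :: d :: q, rfl, hqc.cons (by simpa using hde.symm),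
    List.forall_mem_cons.2 ⟨he, hqF⟩, by rwa [List.getLast?_cons_cons]⟩
termination_by N.height e
decreasing_by exact N.height_lt hde.symm

theorem IsFlow.eq_card_filter_leaving {F : Finset E} {t : V} {m : ℕ} (hF : N.IsFlow F t m)
    {R : Finset V} (hs : N.s ∈ R) (ht : t ∉ R)
    (hR : ∀ e ∈ F, N.head e ∈ R → N.tail e ∈ R) :
    m = (F.filter fun e => N.tail e ∈ R ∧ N.head e ∉ R).card := by
  suffices -(m : ℤ) = -(F.filter fun e => N.tail e ∈ R ∧ N.head e ∉ R).card by omega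
  calc -(m : ℤ) = ∑ v ∈ R, N.excess F v := by
        rw [Finset.sum_eq_single_of_mem _ hs fun v hv hvs => ?_, hF,
          if_neg (by rintro rfl; exact ht hs), if_pos rfl]
        · ring
        · rw [hF, if_neg (by rintro rfl; exact ht hv), if_neg (Ne.symm hvs)]
          ring
    _ = ∑ e ∈ F, -(if N.tail e ∈ R ∧ N.head e ∉ R then 1 else 0) := by
        rw [N.sum_excess]
        refine Finset.sum_congr rfl fun e he => ?_
        by_cases h₁ : N.tail e ∈ R <;> by_cases h₂ : N.head e ∈ R <;> simp_all
    _ = -(F.filter fun e => N.tail e ∈ R ∧ N.head e ∉ R).card := by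
        rw [Finset.sum_neg_distrib, Finset.sum_boole]

theorem IsFlow.reachable_of_lt [Fintype V] {F : Finset E} {t : V} {m k : ℕ}
    (hF : N.IsFlow F t m) (hcut : ∀ C : Finset E, N.IsCutNodes C {t} → k ≤ C.card)
    (hm : m < k) : Relation.ReflTransGen (N.ResAdj F) N.s t := by
  classical
  by_contra hnr
  set R := Finset.univ.filter (Relation.ReflTransGen (N.ResAdj F) N.s)
  have hmem : ∀ v, v ∈ R ↔ Relation.ReflTransGen (N.ResAdj F) N.s v := by simp [R]
  have hsR : N.s ∈ R := (hmem _).2 .refl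
  have htR : t ∉ R := fun h => hnr ((hmem t).1 h)
  have hC : N.IsCutNodes (F.filter fun e => N.tail e ∈ R ∧ N.head e ∉ R) {t} := by
    rintro p hp ⟨b, hb, hbt⟩
    obtain ⟨e, he, heR, heR'⟩ := N.exists_tail_mem_head_not_mem hp hsR fun y hy => by
      rwa [Option.mem_unique hy hb, Finset.mem_singleton.1 hbt]
    -- a channel `e ∉ F` leaving `R` would be a forward residual step out of `R`
    refine ⟨e, he, Finset.mem_filter.2 ⟨by_contra fun heF => heR' ?_, heR, heR'⟩⟩
    exact (hmem _).2
      (((hmem _).1 heR).tail ⟨(e, true), by simpa [IsResidual] using heF, rfl, rfl⟩)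
  have hval := hF.eq_card_filter_leaving hsR htR fun e he h =>
    (hmem _).2 (((hmem _).1 h).tail ⟨(e, false), by simpa [IsResidual] using he, rfl, rfl⟩)
  have := hcut _ hC
  omega

variable [DecidableEq E]

theorem IsFlow.augment {F : Finset E} {t : V} {k : ℕ} (hF : N.IsFlow F t k) (ht : t ≠ N.s)
    (hreach : Relation.ReflTransGen (N.ResAdj F) N.s t) : ∃ F', N.IsFlow F' t (k + 1) := by
  obtain ⟨l, hl, hnd, hls, hlt⟩ := List.exists_nodup_isChain_of_reflTransGen hreach
  obtain ⟨σ, hσ, hsrc, hdst, hres⟩ := N.exists_residual_walk hl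
  obtain ⟨l, rfl⟩ : ∃ l', l = N.s :: l' := by cases l <;> simp_all
  obtain ⟨z, l, rfl⟩ : ∃ z l', l = z :: l' := by
    cases l with
    | nil => exact absurd (by simpa using hlt.symm) ht
    | cons z l => exact ⟨z, l, rfl⟩
  simp only [List.tail_cons, List.dropLast_cons_cons] at hsrc hdst
  obtain ⟨a, σ', rfl⟩ : ∃ a σ', σ = a :: σ' := by cases σ <;> simp_all
  obtain ⟨b, hb, hbt⟩ : ∃ b, (a :: σ').getLast? = some b ∧ N.resDst b = t := by
    rw [← Option.map_eq_some_iff, ← List.getLast?_map, hdst]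
    rwa [List.getLast?_cons_cons] at hlt
  have has : N.resSrc a = N.s := (List.cons.inj hsrc).1
  have hnd' := N.nodup_fst_of_nodup_resSrc hres <| by
    rw [hsrc]
    exact hnd.sublist ((List.dropLast_sublist _).cons_cons _)
  refine ⟨(a :: σ').foldl toggle F, fun v => ?_⟩
  rw [N.excess_foldl_toggle hres hnd' v, hF v,
    List.sum_map_sub_of_isChain N.resSrc N.resDst (fun w => if w = v then 1 else 0) hσ rfl hb,
    has, hbt]
  push_cast
  ring

variable (N) in
theorem exists_isFlow [Fintype V] [Fintype E] {t : V} (ht : t ≠ N.s) {k : ℕ}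
    (hcut : ∀ C : Finset E, N.IsCutNodes C {t} → k ≤ C.card) : ∃ F, N.IsFlow F t k := by
  induction k with
  | zero => exact ⟨∅, fun v => by simp [excess, inflow, outflow]⟩
  | succ k ih =>
    obtain ⟨F, hF⟩ := ih fun C hC => (Nat.le_succ k).trans (hcut C hC)
    exact hF.augment ht (hF.reachable_of_lt hcut k.lt_succ_self)

theorem IsFlow.exists_disjoint_paths [Fintype E] {t : V} (ht : t ≠ N.s) :
    ∀ {k : ℕ} {F : Finset E}, N.IsFlow F t k →
      ∃ P : Fin k → List E,
        (∀ i, N.PathFrom (P i) N.s ∧ (∀ d ∈ (P i).getLast?, N.head d = t) ∧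
          ∀ d ∈ P i, d ∈ F) ∧
          Pairwise (List.Disjoint on P)
  | 0, _, _ => ⟨Fin.elim0, fun i => i.elim0, fun i => i.elim0⟩
  | k + 1, F, hF => by
    obtain ⟨e, he, hes⟩ := N.exists_tail_eq_of_outflow_ne_zero (F := F) (v := N.s) <| by
      have := hF N.s
      rw [excess, N.inflow_s, if_neg ht, if_pos rfl] at this
      omega
    obtain ⟨q, hq, hqc, hqF, hqt⟩ := hF.exists_path he
    have hq0 : q ≠ [] := by
      rintro rfl
      simp at hq
    obtain ⟨b, hb⟩ := Option.ne_none_iff_exists'.1 (mt List.getLast?_eq_none_iff.1 hq0)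
    have hF' : N.IsFlow (F \ q.toFinset) t k := fun v => by
      rw [N.excess_sdiff (fun x hx => hqF x (List.mem_toFinset.1 hx)), N.excess_toFinset hqc hq hb,
        hF v, hqt b hb, hes]
      push_cast
      ring
    obtain ⟨P, hP, hdisj⟩ := exists_disjoint_paths ht hF'
    have hqP : ∀ i, q.Disjoint (P i) := fun i d hdq hdP =>
      (Finset.mem_sdiff.1 ((hP i).2.2 d hdP)).2 (List.mem_toFinset.2 hdq)
    refine ⟨Fin.cons q P, fun i => ?_, Fin.pairwise_disjoint_cons hqP hdisj⟩
    cases i using Fin.cases with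
    | zero => exact ⟨⟨⟨hq0, hqc⟩, by simpa [hq] using hes⟩, hqt, hqF⟩
    | succ i =>
      exact ⟨(hP i).1, (hP i).2.1, fun d hd => (Finset.mem_sdiff.1 ((hP i).2.2 d hd)).1⟩

/-- Menger's theorem for channel-disjoint paths. -/
theorem exists_disjoint_paths_of_le_card_cut [Fintype V] [Fintype E] {t : V} (ht : t ≠ N.s)
    {k : ℕ} (hcut : ∀ C : Finset E, N.IsCutNodes C {t} → k ≤ C.card) :
    ∃ P : Fin k → List E,
      (∀ i, N.PathFrom (P i) N.s ∧ ∀ d ∈ (P i).getLast?, N.head d = t) ∧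
      Pairwise (List.Disjoint on P) := by
  obtain ⟨F, hF⟩ := N.exists_isFlow ht hcut
  obtain ⟨P, hP, hdisj⟩ := hF.exists_disjoint_paths ht
  exact ⟨P, fun i => ⟨(hP i).1, (hP i).2.1⟩, hdisj⟩

end Menger

end Network

section Kernel

open Network

variable {V E F : Type*} [Fintype E] [DecidableEq V] [DecidableEq E] [Field F]
  {N : Network V E} {ω : ℕ} {k : E → E → F} {ks : Fin ω → E → F}
  {f : E → (Fin ω ⊕ E) → F}

theorem IsExtKernel.apply_inr (hf : IsExtKernel F N ω k ks f) (h x : E) :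
    f h (Sum.inr x) =
      ∑ d ∈ N.In (N.tail h), k d h * f d (Sum.inr x) + if h = x then 1 else 0 := by
  rw [hf h]
  simp [In, Finset.sum_filter, Pi.single_apply,
    apply_ite (fun g : Fin ω ⊕ E → F => g (.inr x)), eq_comm]

theorem IsExtKernel.apply_inr_eq_sum_Out (hf : IsExtKernel F N ω k ks f) {h x : E}
    (hhx : h ≠ x) :
    f h (Sum.inr x) = ∑ g ∈ N.Out (N.head x), k x g * f h (Sum.inr g) := by
  -- both sides, plus `[h = x]` on the right, solve the recursion that determines `h ↦ f̃_h(x)`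
  have key := N.eq_of_forall_eq_sum_In k (fun h => if h = x then 1 else 0)
    (u := fun h => f h (Sum.inr x))
    (w := fun h => ∑ g ∈ N.Out (N.head x), k x g * f h (Sum.inr g) + if h = x then 1 else 0)
    (fun h => hf.apply_inr h x) fun h => ?_
  · simpa [hhx] using congrFun key h
  simp only [mul_add, Finset.sum_add_distrib, Finset.mul_sum, mul_ite, mul_one, mul_zero]
  rw [Finset.sum_comm]
  simp only [← Finset.mul_sum, mul_left_comm (k _ h)]
  simp only [fun g => (sub_eq_of_eq_add (hf.apply_inr h g)).symm, mul_sub, Finset.sum_sub_distrib]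
  simp [In, Out, eq_comm]

theorem IsExtKernel.rowT_inr_eq_sum (hf : IsExtKernel F N ω k ks f) {t : V} {x : E}
    (hxt : N.head x ≠ t) :
    rowT F N f {t} (Sum.inr x) =
      ∑ g ∈ N.Out (N.head x), k x g • rowT F N f {t} (Sum.inr g) := by
  funext h
  simp only [rowT, Finset.sum_apply, Pi.smul_apply, smul_eq_mul, Finset.mem_singleton]
  split_ifs with hh
  · exact hf.apply_inr_eq_sum_Out (by rintro rfl; exact hxt hh)
  · simp

theorem IsExtKernel.rowT_mem_DeltaT (hf : IsExtKernel F N ω k ks f) {t : V} {D : Finset E}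
    {x : E} (hx : N.Separates D x t) : rowT F N f {t} (Sum.inr x) ∈ DeltaT F N f {t} D := by
  by_cases hxD : x ∈ D
  · exact Submodule.subset_span ⟨x, hxD, rfl⟩
  have hxt : N.head x ≠ t := fun h => by
    obtain ⟨y, hy, hyD⟩ := hx [x] ⟨by simp, List.isChain_singleton x⟩ rfl (by simpa using h)
    exact hxD (List.mem_singleton.1 hy ▸ hyD)
  rw [hf.rowT_inr_eq_sum hxt]
  exact Submodule.sum_mem _ fun g hg =>
    Submodule.smul_mem _ _ (hf.rowT_mem_DeltaT (hx.of_mem_Out hxD hg))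
termination_by N.height x
decreasing_by exact N.height_lt (Finset.mem_filter.1 hg).2.symm

theorem rankT_le_card {t : V} {ρ D : Finset E} (hD : ∀ x ∈ ρ, N.Separates D x t) :
    rankT F N ω {t} ρ ≤ D.card :=
  Nat.sInf_le ⟨D, fun _ _ _ hf => Submodule.span_le.2 <| by
    rintro _ ⟨x, hx, rfl⟩
    exact hf.rowT_mem_DeltaT (hD x hx), rfl⟩

end Kernel

namespace Network

section ErrorExtension

variable {V E : Type*} [DecidableEq E] (N : Network V E)

/-- The network in which the errors on `ρ` become sources: a new source `none` sends `ω`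
channels `inr i` into `s`, and every channel of `ρ` is re-attached to leave `none`. Such a channel
`e` plays the role of the pair `e' e` of `G̃`, so that a path from `e'` is made to continue
along `e`. -/
def errorExtension (ρ : Finset E) (ω : ℕ) : Network (Option V) (E ⊕ Fin ω) where
  tail := Sum.elim (fun e => if e ∈ ρ then none else some (N.tail e)) fun _ => none
  head := Sum.elim (fun e => some (N.head e)) fun _ => some N.s
  s := none
  no_in_source := by rintro (e | i) <;> simp
  rk := Sum.elim (fun e => N.rk e + 1) fun _ => 0
  acyclic := by
    rintro (d | i) (e | j) h <;> simp only [Sum.elim_inl, Sum.elim_inr] at h ⊢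
    · split_ifs at h
      simpa using N.acyclic d e (Option.some_inj.1 h)
    all_goals simp_all

variable {N} {ρ : Finset E} {ω : ℕ}

@[simp]
theorem errorExtension_tail_inl (e : E) :
    (N.errorExtension ρ ω).tail (.inl e) = if e ∈ ρ then none else some (N.tail e) := rfl

@[simp]
theorem errorExtension_tail_inr (i : Fin ω) : (N.errorExtension ρ ω).tail (.inr i) = none := rfl

@[simp]
theorem errorExtension_head_inl (e : E) :
    (N.errorExtension ρ ω).head (.inl e) = some (N.head e) := rfl

@[simp]
theorem errorExtension_head_inr (i : Fin ω) :
    (N.errorExtension ρ ω).head (.inr i) = some N.s := rfl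

@[simp]
theorem errorExtension_s : (N.errorExtension ρ ω).s = none := rfl

theorem isChain_map_inl_errorExtension_iff {q : List E} (hq : ∀ x ∈ q.tail, x ∉ ρ) :
    ((q.map Sum.inl).IsChain fun a b =>
      (N.errorExtension ρ ω).head a = (N.errorExtension ρ ω).tail b) ↔
    q.IsChain fun d e => N.head d = N.tail e := by
  induction q with
  | nil => simp
  | cons a q ih =>
    cases q with
    | nil => simp
    | cons b q =>
      have hb : b ∉ ρ := hq b List.mem_cons_self
      simp only [List.map_cons, List.isChain_cons_cons, errorExtension_head_inl,
        errorExtension_tail_inl, if_neg hb, Option.some_inj]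
      rw [← List.map_cons, ih fun x hx => hq x (List.mem_cons_of_mem _ hx)]

theorem pathFrom_errorExtension_iff {p : List (E ⊕ Fin ω)} :
    (N.errorExtension ρ ω).PathFrom p none ↔
      ∃ z, ∃ q : List E, p = z :: q.map Sum.inl ∧ (N.errorExtension ρ ω).tail z = none ∧
        (∀ x ∈ q, x ∉ ρ) ∧
        (∀ x ∈ q.head?, (N.errorExtension ρ ω).head z = some (N.tail x)) ∧
        q.IsChain fun d e => N.head d = N.tail e := by
  constructor
  · rintro ⟨⟨hne, hp⟩, hz⟩
    obtain ⟨z, l, rfl⟩ : ∃ z l, p = z :: l := List.exists_cons_of_ne_nil hne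
    obtain ⟨q, rfl, hq⟩ : ∃ q : List E, l = q.map Sum.inl ∧ ∀ x ∈ q, x ∉ ρ := by
      refine List.exists_eq_map_inl fun y hy => ?_
      have := (N.errorExtension ρ ω).tail_ne_s_of_mem_tail hp (e := y) hy
      rcases y with x | i
      · by_cases hx : x ∈ ρ <;> simp_all
      · simp at this
    rw [List.Chain', List.isChain_cons] at hp
    refine ⟨z, q, rfl, hz z rfl, hq, fun x hx => ?_, ?_⟩
    · simpa [if_neg (hq x (List.mem_of_mem_head? hx))] using hp.1 (.inl x) (by simpa using hx)
    · exact (isChain_map_inl_errorExtension_iff fun x hx => hq x (List.mem_of_mem_tail hx)).1 hp.2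
  · rintro ⟨z, q, rfl, hz, hq, hzq, hqc⟩
    refine ⟨⟨List.cons_ne_nil _ _, List.isChain_cons.2 ⟨fun y hy => ?_, ?_⟩⟩,
      fun y hy => ?_⟩
    · obtain ⟨x, hx, rfl⟩ : ∃ x ∈ q.head?, .inl x = y := by simpa [List.head?_map] using hy
      simpa [if_neg (hq x (List.mem_of_mem_head? hx))] using hzq x hx
    · exact (isChain_map_inl_errorExtension_iff fun x hx => hq x (List.mem_of_mem_tail hx)).2 hqc
    · simpa [← Option.mem_some_iff.1 hy] using hz

theorem exists_mem_getLast?_map_inl {l : List E} (hl : l ≠ []) {t : V}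
    (ht : ∀ y ∈ l.getLast?, N.head y = t) :
    ∃ w ∈ (l.map Sum.inl).getLast?,
      (N.errorExtension ρ ω).head w ∈ ({some t} : Finset (Option V)) := by
  obtain ⟨b, hb⟩ := Option.ne_none_iff_exists'.1 (mt List.getLast?_eq_none_iff.1 hl)
  exact ⟨.inl b, by simp [List.getLast?_map, hb], by simp [ht b hb]⟩

/-- The last channel of `ρ` on the path starts a path of the extension, which `C` must meet. -/
theorem exists_inl_mem_of_isCutNodes_errorExtension {t : V} {C : Finset (E ⊕ Fin ω)}
    (hC : (N.errorExtension ρ ω).IsCutNodes C {some t}) {q : List E}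
    (hq : q.IsChain fun d e => N.head d = N.tail e) (hqρ : ∃ x ∈ q, x ∈ ρ)
    (hqt : ∀ y ∈ q.getLast?, N.head y = t) : ∃ y ∈ q, .inl y ∈ C := by
  induction q with
  | nil => simp at hqρ
  | cons a q ih =>
    by_cases hρ' : ∃ x ∈ q, x ∈ ρ
    · have hq0 : q ≠ [] := by rintro rfl; simp at hρ'
      obtain ⟨y, hy, hyC⟩ := ih hq.tail hρ' fun y hy => hqt y <| by
        rwa [List.getLast?_cons, List.getLast?_eq_some_getLast hq0, Option.getD_some,
          ← List.getLast?_eq_some_getLast hq0]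
      exact ⟨y, List.mem_cons_of_mem _ hy, hyC⟩
    push Not at hρ'
    have ha : a ∈ ρ := by
      obtain ⟨x, hx, hxρ⟩ := hqρ
      rcases List.mem_cons.1 hx with rfl | hx
      exacts [hxρ, absurd hxρ (hρ' x hx)]
    obtain ⟨w, hw, hwC⟩ := hC ((a :: q).map Sum.inl)
      (pathFrom_errorExtension_iff.2 ⟨.inl a, q, rfl, by simp [ha], hρ', fun x hx => by
        simpa using (List.isChain_cons.1 hq).1 x hx, hq.tail⟩)
      (exists_mem_getLast?_map_inl (List.cons_ne_nil _ _) hqt)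
    obtain ⟨y, hy, rfl⟩ := List.mem_map.1 hw
    exact ⟨y, hy, hwC⟩

theorem card_Out_errorExtension [Fintype E] [DecidableEq V] :
    ((N.errorExtension ρ ω).Out none).card = ρ.card + ω := by
  rw [← Finset.card_toLeft_add_card_toRight]
  congr
  · ext x
    by_cases hx : x ∈ ρ <;> simp [Out, hx]
  · rw [show ((N.errorExtension ρ ω).Out none).toRight = Finset.univ by ext; simp [Out]]
    exact Finset.card_fin ω

theorem le_card_of_isCutNodes_errorExtension {t : V} {δ : ℕ}
    (hcut : ∀ C : Finset E, N.IsCutNodes C {t} → ω + δ ≤ C.card)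
    (hsep : ∀ D : Finset E, (∀ x ∈ ρ, N.Separates D x t) → δ ≤ D.card)
    {C : Finset (E ⊕ Fin ω)} (hC : (N.errorExtension ρ ω).IsCutNodes C {some t}) :
    ω + δ ≤ C.card := by
  by_cases hall : ∀ i, Sum.inr i ∈ C
  · -- `C` contains every message channel, and its channels of `N` separate `ρ` from `t`
    have hR : C.toRight = Finset.univ := by ext i; simp [hall i]
    have hL : δ ≤ C.toLeft.card := hsep _ fun x hx q hq hqx hqt => by
      simpa using exists_inl_mem_of_isCutNodes_errorExtension hC hq.2
        ⟨x, List.mem_of_mem_head? hqx, hx⟩ hqt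
    rw [← Finset.card_toLeft_add_card_toRight, hR, Finset.card_univ, Fintype.card_fin]
    omega
  · -- some message channel `inr i` avoids `C`, so the channels of `N` in `C` cut `s` from `t`
    push Not at hall
    obtain ⟨i, hi⟩ := hall
    refine (hcut C.toLeft fun p hp hpt => ?_).trans Finset.card_toLeft_le
    have hpt' : ∀ y ∈ p.getLast?, N.head y = t := by
      obtain ⟨b, hb, hbt⟩ := hpt
      intro y hy
      simpa [Option.mem_unique hy hb] using hbt
    by_cases hpρ : ∃ x ∈ p, x ∈ ρ
    · simpa using exists_inl_mem_of_isCutNodes_errorExtension hC hp.1.2 hpρ hpt'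
    push Not at hpρ
    obtain ⟨w, hw, hwC⟩ := hC (.inr i :: p.map .inl)
      (pathFrom_errorExtension_iff.2 ⟨.inr i, p, rfl, rfl, hpρ, fun x hx => by simp [hp.2 x hx],
        hp.1.2⟩) <| by
      have : (.inr i :: p.map .inl).getLast? = (p.map Sum.inl).getLast? := by
        cases p with
        | nil => exact absurd rfl hp.1.1
        | cons => rfl
      exact this ▸ exists_mem_getLast?_map_inl hp.1.1 hpt'
    rcases List.mem_cons.1 hw with rfl | hw
    · exact absurd hwC hi
    · obtain ⟨y, hy, rfl⟩ := List.mem_map.1 hw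
      exact ⟨y, hy, by simpa using hwC⟩

theorem pathFrom_filterMap_of_head?_eq_inr {p : List (E ⊕ Fin ω)} {t : V} (ht : t ≠ N.s)
    (hp : (N.errorExtension ρ ω).PathFrom p none) {i : Fin ω} (hpi : p.head? = some (.inr i))
    (hpt : ∀ w ∈ p.getLast?, (N.errorExtension ρ ω).head w = some t) :
    N.PathFrom (p.filterMap Sum.getLeft?) N.s ∧
      ∀ d ∈ (p.filterMap Sum.getLeft?).getLast?, N.head d = t := by
  obtain ⟨z, q, rfl, -, -, hzq, hq⟩ := pathFrom_errorExtension_iff.1 hp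
  obtain rfl : z = .inr i := by simpa using hpi
  obtain ⟨x, q, rfl⟩ : ∃ x q', q = x :: q' := by
    cases q with
    | nil => exact absurd (by simpa using hpt) ht.symm
    | cons x q => exact ⟨x, q, rfl⟩
  rw [List.map_cons, List.getLast?_cons_cons, ← List.map_cons, List.getLast?_map] at hpt
  simp only [List.filterMap_cons, Sum.getLeft?_inr, List.filterMap_getLeft?_map_inl]
  exact ⟨⟨⟨List.cons_ne_nil _ _, hq⟩, by simpa using (hzq x rfl).symm⟩, fun d hd => by
    simpa using hpt (.inl d) (by simp [Option.mem_def.1 hd])⟩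

theorem pathFrom_filterMap_of_head?_eq_inl {p : List (E ⊕ Fin ω)} {t : V}
    (hp : (N.errorExtension ρ ω).PathFrom p none) {e : E}
    (hpe : p.head? = some (.inl e))
    (hpt : ∀ w ∈ p.getLast?, (N.errorExtension ρ ω).head w = some t) :
    N.PathFrom (p.filterMap Sum.getLeft?) (N.tail e) ∧
      (∀ d ∈ (p.filterMap Sum.getLeft?).getLast?, N.head d = t) ∧
        e ∈ p.filterMap Sum.getLeft? := by
  obtain ⟨z, q, rfl, -, -, hzq, hq⟩ := pathFrom_errorExtension_iff.1 hp
  obtain rfl : z = .inl e := by simpa using hpe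
  rw [← List.map_cons, List.getLast?_map] at hpt
  rw [← List.map_cons, List.filterMap_getLeft?_map_inl]
  exact ⟨⟨⟨List.cons_ne_nil _ _, hq.cons fun x hx => by simpa using hzq x hx⟩, by simp⟩,
    fun d hd => by simpa using hpt (.inl d) (by simp [Option.mem_def.1 hd]), List.mem_cons_self⟩

theorem exists_paths_of_errorExtension [Fintype E] [DecidableEq V] {t : V} (ht : t ≠ N.s)
    {P : Fin (ω + ρ.card) → List (E ⊕ Fin ω)}
    (hP : ∀ j, (N.errorExtension ρ ω).PathFrom (P j) none ∧
      ∀ d ∈ (P j).getLast?, (N.errorExtension ρ ω).head d = some t)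
    (hdisj : Pairwise (List.Disjoint on P)) :
    ∃ (Pmsg : Fin ω → List E) (Perr : (e : E) → e ∈ ρ → List E),
      (∀ i : Fin ω, N.PathFrom (Pmsg i) N.s ∧
        (∀ d ∈ (Pmsg i).getLast?, N.head d = t)) ∧
      (∀ (e : E) (he : e ∈ ρ), N.PathFrom (Perr e he) (N.tail e) ∧
        (∀ d ∈ (Perr e he).getLast?, N.head d = t) ∧ e ∈ Perr e he) ∧
      (∀ i j : Fin ω, i ≠ j → ∀ d, d ∈ Pmsg i → d ∉ Pmsg j) ∧
      (∀ (e₁ : E) (h₁ : e₁ ∈ ρ) (e₂ : E) (h₂ : e₂ ∈ ρ), e₁ ≠ e₂ →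
        ∀ d, d ∈ Perr e₁ h₁ → d ∉ Perr e₂ h₂) ∧
      (∀ (i : Fin ω) (e : E) (he : e ∈ ρ), ∀ d, d ∈ Pmsg i → d ∉ Perr e he) := by
  have hstart : ∀ z, (N.errorExtension ρ ω).tail z = none → ∃ j, (P j).head? = some z :=
    fun z hz => exists_head?_eq_of_card_Out_le (fun j => (hP j).1) hdisj
      (by rw [errorExtension_s, card_Out_errorExtension, add_comm]) hz
  choose jm hjm using fun i : Fin ω => hstart (.inr i) rfl
  choose je hje using fun (e : E) (he : e ∈ ρ) => hstart (.inl e) (by simp [he])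
  have hne {j j' z z'} (hz : (P j).head? = some z) (hz' : (P j').head? = some z') (hzz : z ≠ z') :
      j ≠ j' := by
    rintro rfl
    exact hzz (Option.some_inj.1 (hz.symm.trans hz'))
  have hlow {j j'} (h : j ≠ j') (d : E) (hd : d ∈ (P j).filterMap Sum.getLeft?) :
      d ∉ (P j').filterMap Sum.getLeft? := by
    simp only [List.mem_filterMap, Sum.getLeft?_eq_some_iff, exists_eq_right] at hd ⊢
    exact hdisj h hd
  exact ⟨fun i => (P (jm i)).filterMap Sum.getLeft?,
    fun e he => (P (je e he)).filterMap Sum.getLeft?,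
    fun i => pathFrom_filterMap_of_head?_eq_inr ht (hP _).1 (hjm i) (hP _).2,
    fun e he => pathFrom_filterMap_of_head?_eq_inl (hP _).1 (hje e he) (hP _).2,
    fun i i' hii' => hlow (hne (hjm i) (hjm i') (by simpa using hii')),
    fun e₁ h₁ e₂ h₂ h12 => hlow (hne (hje e₁ h₁) (hje e₂ h₂) (by simpa using h12)),
    fun i e he => hlow (hne (hjm i) (hje e he) (by simp))⟩

end ErrorExtension

end Network

theorem statement17_general {V E : Type*} [Fintype V] [Fintype E] [DecidableEq V] [DecidableEq E]
    (F : Type*) [Field F] (N : Network V E) (ω : ℕ)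
    (t : V) (ht : t ≠ N.s) (hct : ω ≤ N.minCutNode t)
    (ρ : Finset E) (hρ : ρ ∈ Rset F N ω t) :
    ∃ (Pmsg : Fin ω → List E) (Perr : (e : E) → e ∈ ρ → List E),
      (∀ i : Fin ω, N.PathFrom (Pmsg i) N.s ∧
        (∀ d ∈ (Pmsg i).getLast?, N.head d = t)) ∧
      (∀ (e : E) (he : e ∈ ρ), N.PathFrom (Perr e he) (N.tail e) ∧
        (∀ d ∈ (Perr e he).getLast?, N.head d = t) ∧ e ∈ Perr e he) ∧
      (∀ i j : Fin ω, i ≠ j → ∀ d, d ∈ Pmsg i → d ∉ Pmsg j) ∧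
      (∀ (e₁ : E) (h₁ : e₁ ∈ ρ) (e₂ : E) (h₂ : e₂ ∈ ρ), e₁ ≠ e₂ →
        ∀ d, d ∈ Perr e₁ h₁ → d ∉ Perr e₂ h₂) ∧
      (∀ (i : Fin ω) (e : E) (he : e ∈ ρ), ∀ d, d ∈ Pmsg i → d ∉ Perr e he) := by
  obtain ⟨hcard, hrank⟩ := hρ
  have hcut : ∀ C : Finset E, N.IsCutNodes C {t} → ω + ρ.card ≤ C.card := fun C hC => by
    have : N.minCutNode t ≤ C.card := Nat.sInf_le ⟨C, hC, rfl⟩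
    omega
  have hsep : ∀ D : Finset E, (∀ x ∈ ρ, N.Separates D x t) → ρ.card ≤ D.card :=
    fun D hD => hcard ▸ hrank ▸ rankT_le_card hD
  obtain ⟨P, hP, hdisj⟩ := (N.errorExtension ρ ω).exists_disjoint_paths_of_le_card_cut
    (t := some t) (by simp) fun C hC => Network.le_card_of_isCutNodes_errorExtension hcut hsep hC
  exact Network.exists_paths_of_errorExtension ht hP hdisj

/-- For a non-source node `t` with `C_t ≥ ω` and an error pattern
`ρ ∈ R_t(δ_t)` (that is, `|ρ| = rank_t(ρ) = δ_t`), there exist `ω + δ_t`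
channel-disjoint paths in the extended network from `In(s) ∪ ρ'` to `t`: the `ω`
paths starting at the imaginary message channels are paths from `s` to `t`, and the
`δ_t` paths starting at the distinct imaginary error channels `e' ∈ ρ'` are paths
from `tail(e)` to `t` passing through the corresponding channel `e ∈ ρ`. -/
theorem statement17 {V E : Type*} [Fintype V] [Fintype E] [DecidableEq V] [DecidableEq E]
    (F : Type*) [Field F] [Fintype F] (N : Network V E) (ω : ℕ) (hω : 1 ≤ ω)
    (t : V) (ht : t ≠ N.s) (hct : ω ≤ N.minCutNode t)
    (ρ : Finset E) (hρ : ρ ∈ Rset F N ω t) :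
    ∃ (Pmsg : Fin ω → List E) (Perr : (e : E) → e ∈ ρ → List E),
      (∀ i : Fin ω, N.PathFrom (Pmsg i) N.s ∧
        (∀ d ∈ (Pmsg i).getLast?, N.head d = t)) ∧
      (∀ (e : E) (he : e ∈ ρ), N.PathFrom (Perr e he) (N.tail e) ∧
        (∀ d ∈ (Perr e he).getLast?, N.head d = t) ∧ e ∈ Perr e he) ∧
      (∀ i j : Fin ω, i ≠ j → ∀ d, d ∈ Pmsg i → d ∉ Pmsg j) ∧
      (∀ (e₁ : E) (h₁ : e₁ ∈ ρ) (e₂ : E) (h₂ : e₂ ∈ ρ), e₁ ≠ e₂ →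
        ∀ d, d ∈ Perr e₁ h₁ → d ∉ Perr e₂ h₂) ∧
      (∀ (i : Fin ω) (e : E) (he : e ∈ ρ), ∀ d, d ∈ Pmsg i → d ∉ Perr e he) :=
  statement17_general F N ω t ht hct ρ hρ
end
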